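/- arXiv:1505.01780 — 2 statements merged into one kernel-verified Lean document; each statement's English description precedes it below -/
import Mathlib

section
/- Assume moreover that the Gram matrix M_f is invertible (i.e. f is non-degenerate). Let x_1,...,x_k be linearly independent vectors of F^N (2 ≤ k ≤ N) and let X = X(x_1,...,x_k) be their Plücker tensor. Then X^σ ∘ M_f ∘ X = O, where O is the null tensor of degree 2k−2, if and only if the subspace ⟨x_1,...,x_k⟩ is totally f-isotropic. -/
open scoped BigOperators Matrix

/-- A tensor of degree `r` over `F` in dimension `N`. -/
abbrev Tensor (F : Type*) (N r : ℕ) := (Fin r → Fin N) → F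

namespace Tensor

variable {F : Type*} [Field F] {N : ℕ}

/-- The `p`-product of a tensor of degree `r` with a tensor of degree `s`. -/
def pProd {r s p : ℕ} (X : Tensor F N r) (Y : Tensor F N s)
    (hpr : p ≤ r) (hps : p ≤ s) : Tensor F N ((r - p) + (s - p)) :=
  fun idx => ∑ h : Fin p → Fin N,
    X (fun i => if hi : (i : ℕ) < r - p then idx ⟨i, by omega⟩
        else h ⟨(i : ℕ) - (r - p), by have := i.isLt; omega⟩) *
    Y (fun j => if hj : (j : ℕ) < p then h ⟨j, hj⟩
        else idx ⟨(r - p) + ((j : ℕ) - p), by have := j.isLt; omega⟩)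

/-- The tensor product of two tensors. -/
def tProd {r s : ℕ} (X : Tensor F N r) (Y : Tensor F N s) : Tensor F N (r + s) :=
  fun idx => X (fun i => idx ⟨i, by have := i.isLt; omega⟩) *
             Y (fun j => idx ⟨r + (j : ℕ), by have := j.isLt; omega⟩)

/-- The pseudo-tensor product `X ⊙ Y` of tensors of even degrees `2u` and `2v`. -/
def pseudoProd {u v : ℕ} (X : Tensor F N (2 * u)) (Y : Tensor F N (2 * v)) :
    Tensor F N (2 * (u + v)) :=
  fun idx =>
    X (fun i => if _ : (i : ℕ) < u then idx ⟨i, by have := i.isLt; omega⟩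
        else idx ⟨u + v + ((i : ℕ) - u), by have := i.isLt; omega⟩) *
    Y (fun j => if _ : (j : ℕ) < v then idx ⟨u + (j : ℕ), by have := j.isLt; omega⟩
        else idx ⟨2 * u + v + ((j : ℕ) - v), by have := j.isLt; omega⟩)

/-- A matrix regarded as a tensor of degree `2`. -/
def ofMat (M : Matrix (Fin N) (Fin N) F) : Tensor F N 2 := fun idx => M (idx 0) (idx 1)

/-- A vector regarded as a tensor of degree `1`. -/
def ofVec (v : Fin N → F) : Tensor F N 1 := fun idx => v (idx 0)

/-- Pseudo-tensor powers `⊙^r A` of a matrix (tensor of degree 2): `⊙^1 A = A`,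
`⊙^(r+1) A = (⊙^r A) ⊙ A`. -/
def pPow (A : Tensor F N 2) : (r : ℕ) → Tensor F N (2 * r)
  | 0 => fun _ => 1
  | r + 1 => pseudoProd (u := r) (v := 1) (pPow A r) A

/-- Recasting a tensor along an equality of degrees. -/
def cast {r r' : ℕ} (h : r = r') (X : Tensor F N r) : Tensor F N r' :=
  fun idx => X (fun i => idx (Fin.cast h i))

/-- Applying a map `g : F → F` to every entry of a tensor. -/
def map (g : F → F) {r : ℕ} (X : Tensor F N r) : Tensor F N r := fun idx => g (X idx)

/-- The Plücker tensor of `k` vectors of `F^N`: the alternating tensor of degree `k`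
whose entry at `(i_1, …, i_k)` is the determinant of the `k × k` matrix whose `(r,s)`
entry is the `i_r`-th coordinate of `x_s`. It represents `x_1 ∧ ⋯ ∧ x_k`. -/
def plucker {k : ℕ} (x : Fin k → Fin N → F) : Tensor F N k :=
  fun idx => Matrix.det (Matrix.of fun r s => x s (idx r))

/-- The `(σ, ε)`-sesquilinear form on `F^N` with Gram matrix `M`. -/
def sesq (σ : F → F) (M : Matrix (Fin N) (Fin N) F) (v w : Fin N → F) : F :=
  ∑ i, ∑ j, σ (v i) * M i j * w j

end Tensor

/-! Write `k = m + 1`. Expanding the Plücker tensor along its last and its first index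
(Laplace), the entry of `X^σ ∘ M_f ∘ X` at `(I, J)` becomes
`±∑ s t, σ(c_s(I)) f(x_s, x_t) c_t(J)`, where `c_t(J)` is the signed `m × m` minor of
`x_1, …, x_k` without `x_t`, on the rows `J`. So if the Gram matrix `G` of `f` on the `x_s`
vanishes, so does the tensor. Conversely, linear independence provides `k` coordinates `ρ` on
which the `x_s` form an invertible matrix `B`. Taking for `I` and `J` the `ρ` with one
coordinate omitted, the matrix `C` of the cofactors is, up to signs, the adjugate of `B`; so
`C^σ G Cᵀ = 0` with `C` invertible, and `G = 0`. By sesquilinearity, `G = 0` says exactly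
that the span of the `x_s` is totally isotropic. -/

theorem LinearMap.apply_eq_zero_of_mem_span_range₂ {R S M N P ι κ : Type*} [Semiring R]
    [CommSemiring S] {σ : R →+* S} [AddCommMonoid M] [Module R M] [AddCommMonoid N] [Module S N]
    [AddCommMonoid P] [Module S P] (B : M →ₛₗ[σ] N →ₗ[S] P) {v : ι → M} {w : κ → N}
    (h : ∀ i j, B (v i) (w j) = 0)
    {a : M} (ha : a ∈ Submodule.span R (Set.range v)) {b : N}
    (hb : b ∈ Submodule.span S (Set.range w)) : B a b = 0 := by
  have hvb : ∀ i, B (v i) b = 0 := fun i =>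
    LinearMap.eqOn_span (g := 0) (by rintro _ ⟨j, rfl⟩; exact h i j) hb
  exact LinearMap.eqOn_span (f := B.flip b) (g := 0) (by rintro _ ⟨i, rfl⟩; exact hvb i) ha

theorem Matrix.exists_isUnit_submatrix_of_linearIndependent_row {K m n : Type*} [Field K]
    [Fintype m] [Fintype n] [DecidableEq m] {A : Matrix m n K} (hA : LinearIndependent K A.row) :
    ∃ ρ : m → n, IsUnit (A.submatrix id ρ) := by
  have hcols : Submodule.span K (Set.range A.col) = ⊤ := by
    apply Submodule.eq_top_of_finrank_eq
    rw [← A.rank_eq_finrank_span_cols, hA.rank_matrix, Module.finrank_fintype_fun_eq_card]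
  obtain ⟨κ, a, -, hspan, hli⟩ := exists_linearIndependent' K A.col
  let basis : Module.Basis κ K (m → K) := .mk hli (by rw [hspan, hcols])
  let e : m ≃ κ := (basis.indexEquiv (Pi.basisFun K m)).symm
  refine ⟨a ∘ e, Matrix.linearIndependent_cols_iff_isUnit.mp ?_⟩
  exact hli.comp e e.injective

namespace Tensor

variable {F : Type*} [Field F] {N : ℕ}

theorem pProd_one_append {r s : ℕ} (X : Tensor F N (r + 1)) (Y : Tensor F N (s + 1))
    (I : Fin r → Fin N) (J : Fin s → Fin N) :
    pProd (p := 1) X Y (by omega) (by omega) (Fin.append I J) =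
      ∑ h : Fin N, X (Fin.snoc I h) * Y (Fin.cons h J) := by
  rw [pProd, ← (Equiv.funUnique (Fin 1) (Fin N)).symm.sum_comp]
  refine Finset.sum_congr rfl fun h _ => ?_
  congr 2 <;> funext i
  · induction i using Fin.lastCases with
    | last => simp
    | cast j =>
      simp only [Fin.val_castSucc, Fin.snoc_castSucc, Nat.add_sub_cancel, j.isLt, dif_pos]
      exact Fin.append_left I J j
  · induction i using Fin.cases with
    | zero => simp
    | succ j =>
      simp only [Fin.val_succ, Order.lt_one_iff, Nat.add_eq_zero_iff, one_ne_zero, and_false,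
        ↓reduceDIte, Nat.add_one_sub_one, add_tsub_cancel_right, Fin.cons_succ]
      exact Fin.append_right I J j

theorem pProd_ofMat_snoc {r : ℕ} (X : Tensor F N (r + 1)) (M : Matrix (Fin N) (Fin N) F)
    (I : Fin r → Fin N) (b : Fin N) :
    pProd (p := 1) X (ofMat M) (by omega) (by omega) (Fin.snoc I b) =
      ∑ a : Fin N, X (Fin.snoc I a) * M a b := by
  rw [Fin.snoc_eq_append, pProd_one_append (r := r) (s := 1)]
  rfl

def sesqGram {ι : Type*} (σ : F → F) (M : Matrix (Fin N) (Fin N) F) (x : ι → Fin N → F) :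
    Matrix ι ι F :=
  Matrix.of fun s t => sesq σ M (x s) (x t)

theorem sesq_eq_toLinearMapₛₗ₂' (σ : F →+* F) (M : Matrix (Fin N) (Fin N) F)
    (v w : Fin N → F) :
    sesq σ M v w = Matrix.toLinearMapₛₗ₂' F σ (RingHom.id F) M v w := by
  simp only [sesq, Matrix.toLinearMapₛₗ₂'_apply, RingHom.id_apply, smul_eq_mul]
  exact Finset.sum_congr rfl fun i _ => Finset.sum_congr rfl fun j _ => by ring

theorem sesqGram_eq_zero_iff {ι : Type*} (σ : F →+* F) (M : Matrix (Fin N) (Fin N) F)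
    (x : ι → Fin N → F) :
    sesqGram σ M x = 0 ↔ ∀ w₁ ∈ Submodule.span F (Set.range x),
      ∀ w₂ ∈ Submodule.span F (Set.range x), sesq σ M w₁ w₂ = 0 := by
  refine ⟨fun h w₁ h₁ w₂ h₂ => ?_, fun h => ?_⟩
  · rw [sesq_eq_toLinearMapₛₗ₂']
    refine LinearMap.apply_eq_zero_of_mem_span_range₂ _ (fun s t => ?_) h₁ h₂
    rw [← sesq_eq_toLinearMapₛₗ₂']
    exact congrFun₂ h s t
  · ext s t
    exact h _ (Submodule.subset_span ⟨s, rfl⟩) _ (Submodule.subset_span ⟨t, rfl⟩)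

section Plucker

variable {m : ℕ} (x : Fin (m + 1) → Fin N → F)

def pluckerCofactor (J : Fin m → Fin N) (t : Fin (m + 1)) : F :=
  (-1) ^ (t : ℕ) * plucker (fun c => x (t.succAbove c)) J

theorem plucker_cons (b : Fin N) (J : Fin m → Fin N) :
    plucker x (Fin.cons b J) = ∑ t, x t b * pluckerCofactor x J t := by
  rw [plucker, Matrix.det_succ_row_zero]
  refine Finset.sum_congr rfl fun t _ => ?_
  simp only [pluckerCofactor, plucker, Matrix.of_apply, Fin.cons_zero]
  rw [mul_comm ((-1 : F) ^ (t : ℕ)), mul_assoc]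
  rfl

theorem plucker_snoc (I : Fin m → Fin N) (a : Fin N) :
    plucker x (Fin.snoc I a) = (-1) ^ m * ∑ t, x t a * pluckerCofactor x I t := by
  rw [plucker, Matrix.det_succ_row _ (Fin.last m), Finset.mul_sum]
  refine Finset.sum_congr rfl fun t _ => ?_
  simp only [pluckerCofactor, plucker, Matrix.of_apply, Fin.snoc_last, Fin.val_last, pow_add,
    Matrix.submatrix, Fin.succAbove_last, Fin.snoc_castSucc]
  ring

theorem pProd_pProd_plucker_append (σ : F →+* F) (M : Matrix (Fin N) (Fin N) F)
    (I J : Fin m → Fin N) :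
    pProd (p := 1) (pProd (p := 1) (map σ (plucker x)) (ofMat M) (by omega) (by omega))
        (plucker x) (by omega) (by omega) (Fin.append I J) =
      (-1) ^ m * ∑ s, ∑ t, σ (pluckerCofactor x I s) * sesqGram σ M x s t *
        pluckerCofactor x J t := by
  rw [pProd_one_append (r := m) (s := m)]
  simp only [pProd_ofMat_snoc, map, plucker_snoc, plucker_cons, sesqGram, sesq, Matrix.of_apply,
    map_mul, map_sum, map_pow, map_neg, map_one, Finset.mul_sum, Finset.sum_mul]
  conv_lhs => rw [Finset.sum_comm]
  conv_rhs => rw [Finset.sum_comm]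
  refine Finset.sum_congr rfl fun t _ => ?_
  conv_lhs => rw [Finset.sum_comm]
  conv_rhs => rw [Finset.sum_comm]
  refine Finset.sum_congr rfl fun a _ => ?_
  rw [Finset.sum_comm]
  refine Finset.sum_congr rfl fun s _ => Finset.sum_congr rfl fun b _ => ?_
  ring

def pluckerCofactorMatrix (ρ : Fin (m + 1) → Fin N) : Matrix (Fin (m + 1)) (Fin (m + 1)) F :=
  Matrix.of fun b t => pluckerCofactor x (fun r => ρ (b.succAbove r)) t

theorem pluckerCofactorMatrix_eq_diagonal_mul_adjugate (ρ : Fin (m + 1) → Fin N) :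
    pluckerCofactorMatrix x ρ =
      Matrix.diagonal (fun b : Fin (m + 1) => (-1 : F) ^ (b : ℕ)) *
        ((Matrix.of x).submatrix id ρ).adjugate := by
  ext b t
  rw [Matrix.diagonal_mul, Matrix.adjugate_fin_succ_eq_det_submatrix, ← mul_assoc, pow_add,
    mul_comm ((-1 : F) ^ (t : ℕ)), ← mul_assoc, ← pow_add, Even.neg_one_pow ⟨_, rfl⟩,
    one_mul, ← Matrix.det_transpose]
  rfl

theorem isUnit_pluckerCofactorMatrix {ρ : Fin (m + 1) → Fin N}
    (hρ : IsUnit ((Matrix.of x).submatrix id ρ)) : IsUnit (pluckerCofactorMatrix x ρ) := by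
  rw [Matrix.isUnit_iff_isUnit_det] at hρ ⊢
  rw [pluckerCofactorMatrix_eq_diagonal_mul_adjugate, Matrix.det_mul, Matrix.det_diagonal,
    Matrix.det_adjugate]
  exact .mul (by simp [Finset.prod_eq_zero_iff]) (hρ.pow _)

theorem pProd_pProd_plucker_append_succAbove (σ : F →+* F) (M : Matrix (Fin N) (Fin N) F)
    (ρ : Fin (m + 1) → Fin N) (a b : Fin (m + 1)) :
    pProd (p := 1) (pProd (p := 1) (map σ (plucker x)) (ofMat M) (by omega) (by omega))
        (plucker x) (by omega) (by omega)
        (Fin.append (fun r => ρ (a.succAbove r)) (fun r => ρ (b.succAbove r))) =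
      (-1) ^ m * ((pluckerCofactorMatrix x ρ).map σ * sesqGram σ M x *
        (pluckerCofactorMatrix x ρ)ᵀ) a b := by
  rw [pProd_pProd_plucker_append, Matrix.mul_apply, Finset.sum_comm]
  simp only [Matrix.mul_apply, Finset.sum_mul]
  rfl

theorem pProd_pProd_plucker_eq_zero_iff (σ : F →+* F) (M : Matrix (Fin N) (Fin N) F)
    (hx : LinearIndependent F x) :
    pProd (p := 1) (pProd (p := 1) (map σ (plucker x)) (ofMat M) (by omega) (by omega))
        (plucker x) (by omega) (by omega) = 0 ↔ sesqGram σ M x = 0 := by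
  constructor
  · intro hT
    obtain ⟨ρ, hρ⟩ := Matrix.exists_isUnit_submatrix_of_linearIndependent_row (A := .of x) hx
    set C := pluckerCofactorMatrix x ρ
    have hC : IsUnit C := isUnit_pluckerCofactorMatrix x hρ
    have hCσ : IsUnit (C.map σ) := hC.map σ.mapMatrix
    have hCGC : C.map σ * sesqGram σ M x * Cᵀ = 0 := by
      ext a b
      have hab := congrFun hT (Fin.append (fun r => ρ (a.succAbove r)) fun r => ρ (b.succAbove r))
      rw [pProd_pProd_plucker_append_succAbove] at hab
      simpa using hab
    rwa [((Matrix.isUnit_transpose C).mpr hC).mul_left_eq_zero, hCσ.mul_right_eq_zero] at hCGC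
  · intro hG
    funext idx
    obtain ⟨I, J, rfl⟩ : ∃ I J : Fin m → Fin N, Fin.append I J = idx :=
      ⟨_, _, Fin.append_castAdd_natAdd⟩
    simp [pProd_pProd_plucker_append, hG]

end Plucker

end Tensor

/-- When the Gram matrix `M_f` is invertible, for linearly independent
`x_1, …, x_k` with Plücker tensor `X`, the equation `X^σ ∘ M_f ∘ X = O` holds iff
`⟨x_1, …, x_k⟩` is totally `f`-isotropic. -/
theorem plucker_oneProd_gram_eq_zero_iff_totally_isotropic_of_nondegenerate
    {F : Type*} [Field F] {N k : ℕ} (hk : 2 ≤ k) (σ : F ≃+* F) (M : Matrix (Fin N) (Fin N) F)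
    (x : Fin k → Fin N → F) (hx : LinearIndependent F x) :
    Tensor.pProd (p := 1)
        (Tensor.pProd (p := 1) (Tensor.map σ (Tensor.plucker x)) (Tensor.ofMat M)
          (by omega) (by omega))
        (Tensor.plucker x) (by omega) (by omega) = 0 ↔
      ∀ w₁ ∈ Submodule.span F (Set.range x), ∀ w₂ ∈ Submodule.span F (Set.range x),
        Tensor.sesq σ M w₁ w₂ = 0 := by
  obtain ⟨m, rfl⟩ : ∃ m, k = m + 1 := ⟨k - 1, by omega⟩
  exact (Tensor.pProd_pProd_plucker_eq_zero_iff x (σ : F →+* F) M hx).trans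
    (Tensor.sesqGram_eq_zero_iff (σ : F →+* F) M x)
end

section
/- Let A and B be N×N matrices over F and let r be a positive integer. Then (⊙^r B) ∘_r (⊙^r A) = ⊙^r (BA), where BA is the usual row-times-column matrix product. -/
open scoped BigOperators Matrix

/-!
Entrywise, `⊙^r A` is a product of `r` entries of `A`: the first `r` indices are row indices and
the last `r` are column indices, paired up slot by slot. Contracting `⊙^r B` with `⊙^r A` over
the `r` middle indices `h` therefore gives `∑_h ∏_k B(i_k, h_k) A(h_k, j_k)`, which is the
expansion of `∏_k ∑_h B(i_k, h) A(h, j_k) = ∏_k (BA)(i_k, j_k)`.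
-/

namespace Tensor

variable {F : Type*} [Field F] {N : ℕ}

lemma pPow_ofMat_apply (A : Matrix (Fin N) (Fin N) F) (r : ℕ) (idx : Fin (2 * r) → Fin N) :
    pPow (ofMat A) r idx = ∏ i : Fin r, A (idx ⟨i, by omega⟩) (idx ⟨r + i, by omega⟩) := by
  induction r with
  | zero => simp [pPow]
  | succ r ih =>
    rw [pPow, pseudoProd, ih, Fin.prod_univ_castSucc]
    congr 1
    · refine Finset.prod_congr rfl fun i _ => ?_
      simp only [Fin.val_castSucc, Fin.is_lt, dite_true, add_lt_iff_neg_left, not_lt_zero,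
        dite_false]
      congr 3
      omega
    · simp only [ofMat, Fin.isValue, Fin.coe_ofNat_eq_mod, Nat.zero_mod, Order.lt_one_iff,
        ↓reduceDIte, add_zero, Nat.mod_succ, lt_self_iff_false, tsub_self, Fin.val_last]
      congr 3
      omega

end Tensor

/-- `(⊙^r B) ∘_r (⊙^r A) = ⊙^r (BA)` for matrices `A, B` and a positive
integer `r`. -/
theorem pProd_pPow_pPow_eq_pPow_mul
    {F : Type*} [Field F] {N : ℕ} (A B : Matrix (Fin N) (Fin N) F) (r : ℕ) :
    Tensor.cast (by omega)
        (Tensor.pProd (p := r) (Tensor.pPow (Tensor.ofMat B) r) (Tensor.pPow (Tensor.ofMat A) r)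
          (by omega) (by omega)) =
      Tensor.pPow (Tensor.ofMat (B * A)) r := by
  funext idx
  simp only [Tensor.cast, Tensor.pProd, Tensor.pPow_ofMat_apply, Matrix.mul_apply,
    Fintype.prod_sum, ← Finset.prod_mul_distrib]
  refine Fintype.sum_congr _ _ fun h => Fintype.prod_congr _ _ fun i => ?_
  have hr : 2 * r - r = r := by omega
  simp [hr]
end
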